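/- Let S be an M×E matrix with rank M, R the generic rate matrix, and assume det(SR) ≢ 0. For j* ∈ E, the polynomial identity z^{j*}_{j*} · det(SR) = Σ_{J : M → E∖{j*}} sgn(J)·det(S^{J(M)})·∏_m r_{J(m),m} holds, where z^{j*} = -B^{-1}e_{j*} and the sum ranges over all child selections J avoiding j*. -/

import Mathlib

/-!
Write `D = [[-1, R], [S, 0]]`. By Cramer's rule `z_{j₀} = -(D⁻¹)_{j₀ j₀}` is a ratio of
determinants, and replacing row `j₀` of `D` by `-e_{j₀}` amounts to zeroing row `j₀` of `R`.
The Schur complement of the block `-1` evaluates both determinants as `(-1)^E det (S R)` and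
`(-1)^E det (S R')`, where `R'` is `R` with row `j₀` zeroed, so `z_{j₀} det (S R) = det (S R')`.
Expanding `det (S R')` multilinearly in the columns of `S R'` gives the sum over child
selections: a non-injective `J` repeats a column of `S`, and a `J` through `j₀` or along a
non-edge picks a zero entry of `R'`.
-/

namespace Matrix

section

variable {m n R : Type*} [CommRing R] [DecidableEq m]

theorem fromBlocks_neg_one_updateRow_inl [DecidableEq n] (B : Matrix m n R) (C : Matrix n m R)
    (j : m) :
    (fromBlocks (-1) B C 0).updateRow (Sum.inl j) (-Pi.single (Sum.inl j) 1) =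
      fromBlocks (-1) (B.updateRow j 0) C 0 := by
  ext (i | i) (k | k)
  · rcases eq_or_ne i j with rfl | h
    · simp [one_apply, Pi.single_apply, eq_comm]
    · simp [updateRow_apply, h]
  · rcases eq_or_ne i j with rfl | h <;> simp [updateRow_apply, *]
  · simp
  · simp

variable [Fintype m]

theorem det_submatrix_eq_zero_of_not_injective (A : Matrix m n R) {J : m → n}
    (hJ : ¬Function.Injective J) : (A.submatrix id J).det = 0 := by
  obtain ⟨i, i', hJii', hii'⟩ : ∃ i i', J i = J i' ∧ i ≠ i' := by
    simpa [Function.Injective] using hJ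
  exact det_zero_of_column_eq hii' fun k => by simp [hJii']

variable [Fintype n]

/-- Cauchy–Binet, summed over all maps `J` rather than over subsets. -/
theorem det_mul_eq_sum_prod_mul_det_submatrix (A : Matrix m n R) (B : Matrix n m R) :
    (A * B).det = ∑ J : m → n, (∏ i, B (J i) i) * (A.submatrix id J).det := by
  have hrows : (A * B)ᵀ = fun i => ∑ j, B j i • Aᵀ j := by
    ext i k
    simp [mul_apply, mul_comm]
  have hexp := (detRowAlternating : (m → R) [⋀^m]→ₗ[R] R).toMultilinearMap.map_sum
    fun i j => B j i • Aᵀ j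
  rw [← det_transpose, hrows]
  refine hexp.trans (Finset.sum_congr rfl fun J _ => ?_)
  rw [AlternatingMap.coe_multilinearMap, AlternatingMap.map_smul_univ, smul_eq_mul,
    ← det_transpose (A.submatrix id J)]
  rfl

theorem det_fromBlocks_neg_one₁₁ [DecidableEq n] (B : Matrix m n R) (C : Matrix n m R) :
    (fromBlocks (-1) B C 0).det = (-1) ^ Fintype.card m * (C * B).det := by
  let _ : Invertible (-1 : Matrix m m R) := ⟨-1, by simp, by simp⟩
  rw [det_fromBlocks₁₁, invOf_eq_right_inv (by simp : (-1 : Matrix m m R) * -1 = 1)]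
  simp [det_neg]

end

section

variable {m n K : Type*} [Field K] [Fintype m] [DecidableEq m]

theorem inv_apply_self_mul_det (A : Matrix m m K) (hA : A.det ≠ 0) (i : m) :
    A⁻¹ i i * A.det = (A.updateRow i (Pi.single i 1)).det := by
  rw [inv_def, smul_apply, Ring.inverse_eq_inv, smul_eq_mul, adjugate_apply, mul_right_comm,
    inv_mul_cancel₀ hA, one_mul]

theorem neg_inv_fromBlocks_mulVec_single_inl_mul_det [Fintype n] [DecidableEq n]
    (B : Matrix m n K) (C : Matrix n m K) (hCB : (C * B).det ≠ 0) (j : m) :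
    (-((fromBlocks (-1) B C 0)⁻¹ *ᵥ Pi.single (Sum.inl j) 1)) (Sum.inl j) * (C * B).det =
      (C * B.updateRow j 0).det := by
  set D := fromBlocks (-1) B C 0
  have hD : D.det = (-1) ^ Fintype.card m * (C * B).det := det_fromBlocks_neg_one₁₁ B C
  have hsign : ((-1 : K) ^ Fintype.card m) ≠ 0 := pow_ne_zero _ (neg_ne_zero.mpr one_ne_zero)
  refine mul_left_cancel₀ hsign ?_
  calc (-1) ^ Fintype.card m * ((-(D⁻¹ *ᵥ Pi.single (Sum.inl j) 1)) (Sum.inl j) * (C * B).det)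
      = -(D⁻¹ (Sum.inl j) (Sum.inl j) * D.det) := by
        rw [hD, mulVec_single_one]
        simp only [Pi.neg_apply, col_apply]
        ring
    _ = (D.updateRow (Sum.inl j) (-Pi.single (Sum.inl j) 1)).det := by
        rw [inv_apply_self_mul_det D (hD ▸ mul_ne_zero hsign hCB), ← neg_one_mul,
          ← det_updateRow_smul, neg_one_smul]
    _ = (-1) ^ Fintype.card m * (C * B.updateRow j 0).det := by
        rw [fromBlocks_neg_one_updateRow_inl, det_fromBlocks_neg_one₁₁]

end

end Matrix

open MvPolynomial in
open scoped Classical in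
theorem self_influence_expansion_general (E M : ℕ) (inp : Fin M → Fin E → Prop)
    (S : Matrix (Fin M) (Fin E) ℝ) (j₀ : Fin E)
    (R : Matrix (Fin E) (Fin M) (FractionRing (MvPolynomial (Fin E × Fin M) ℝ)))
    (hR : ∀ j m, R j m = if inp m j then
      algebraMap (MvPolynomial (Fin E × Fin M) ℝ) _ (X (j, m)) else 0)
    (S' : Matrix (Fin M) (Fin E) (FractionRing (MvPolynomial (Fin E × Fin M) ℝ)))
    (hS' : ∀ m j, S' m j = algebraMap (MvPolynomial (Fin E × Fin M) ℝ) _ (C (S m j)))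
    (hdet : (S' * R).det ≠ 0)
    (B : Matrix (Fin E ⊕ Fin M) (Fin E ⊕ Fin M)
      (FractionRing (MvPolynomial (Fin E × Fin M) ℝ)))
    (hB : B = Matrix.fromBlocks (-1) R S' 0)
    (z : Fin E ⊕ Fin M → FractionRing (MvPolynomial (Fin E × Fin M) ℝ))
    (hz : z = -(B⁻¹).mulVec (Pi.single (Sum.inl j₀) 1)) :
    z (Sum.inl j₀) * (S' * R).det =
      algebraMap (MvPolynomial (Fin E × Fin M) ℝ) _
        (∑ J : Fin M → Fin E,
          if Function.Injective J ∧ (∀ m, inp m (J m)) ∧ (∀ m, J m ≠ j₀) then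
            C ((S.submatrix id J).det) * ∏ m, X (J m, m)
          else 0) := by
  set P := algebraMap (MvPolynomial (Fin E × Fin M) ℝ)
    (FractionRing (MvPolynomial (Fin E × Fin M) ℝ))
  have hR₀ : ∀ j m, R.updateRow j₀ 0 j m = P (if inp m j ∧ j ≠ j₀ then X (j, m) else 0) := by
    intro j m
    rcases eq_or_ne j j₀ with rfl | h <;> simp [apply_ite P, *]
  have hS'J : ∀ J : Fin M → Fin E, (S'.submatrix id J).det = P (C (S.submatrix id J).det) := by
    intro J
    rw [← RingHom.comp_apply, RingHom.map_det]
    congr 1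
    ext
    simp [hS']
  subst hB hz
  rw [Matrix.neg_inv_fromBlocks_mulVec_single_inl_mul_det R S' hdet j₀,
    Matrix.det_mul_eq_sum_prod_mul_det_submatrix, map_sum]
  refine Finset.sum_congr rfl fun J _ => ?_
  simp only [hR₀, hS'J, ← map_prod, ← map_mul, Fintype.prod_ite_zero, forall_and]
  by_cases hJ : Function.Injective J
  · simp [hJ, mul_comm]
  · simp [hJ, Matrix.det_submatrix_eq_zero_of_not_injective]

open MvPolynomial in
open scoped Classical in
theorem self_influence_expansion (E M : ℕ) (inp : Fin M → Fin E → Prop)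
    (S : Matrix (Fin M) (Fin E) ℝ) (hrank : S.rank = M) (j₀ : Fin E)
    (R : Matrix (Fin E) (Fin M) (FractionRing (MvPolynomial (Fin E × Fin M) ℝ)))
    (hR : ∀ j m, R j m = if inp m j then
      algebraMap (MvPolynomial (Fin E × Fin M) ℝ) _ (X (j, m)) else 0)
    (S' : Matrix (Fin M) (Fin E) (FractionRing (MvPolynomial (Fin E × Fin M) ℝ)))
    (hS' : ∀ m j, S' m j = algebraMap (MvPolynomial (Fin E × Fin M) ℝ) _ (C (S m j)))
    (hdet : (S' * R).det ≠ 0)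
    (B : Matrix (Fin E ⊕ Fin M) (Fin E ⊕ Fin M)
      (FractionRing (MvPolynomial (Fin E × Fin M) ℝ)))
    (hB : B = Matrix.fromBlocks (-1) R S' 0)
    (z : Fin E ⊕ Fin M → FractionRing (MvPolynomial (Fin E × Fin M) ℝ))
    (hz : z = -(B⁻¹).mulVec (Pi.single (Sum.inl j₀) 1)) :
    z (Sum.inl j₀) * (S' * R).det =
      algebraMap (MvPolynomial (Fin E × Fin M) ℝ) _
        (∑ J : Fin M → Fin E,
          if Function.Injective J ∧ (∀ m, inp m (J m)) ∧ (∀ m, J m ≠ j₀) then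
            C ((S.submatrix id J).det) * ∏ m, X (J m, m)
          else 0) :=
  self_influence_expansion_general E M inp S j₀ R hR S' hS' hdet B hB z hz
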